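/- arXiv:2004.11733 — 2 statements merged into one kernel-verified Lean document; each statement's English description precedes it below -/
import Mathlib

section
/- Let R be a ring, q ∈ R invertible and central, and let (a,b,c,d) and (a',b',c',d') each satisfy the M_q(2) relations (ba = q·ab, ca = q·ac, db = q·bd, dc = q·cd, cb = bc, da − ad = (q−q⁻¹)bc, and likewise for the primed elements), with every unprimed element commuting with every primed element. Define the matrix product entries A = aa' + bc', B = ab' + bd', C = ca' + dc', D = cb' + dd'. Then AD − q⁻¹·BC = (ad − q⁻¹·bc)·(a'd' − q⁻¹·b'c'). -/
private lemma qdm_swap4 {R : Type*} [Ring R] {a b c d : R} (h : Commute b c) :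
    a * b * (c * d) = a * c * (b * d) := by
  rw [mul_assoc a b, ← mul_assoc b c, h.eq, mul_assoc c b, ← mul_assoc a c]

private lemma qdm_pull {R : Type*} [Ring R] {s : R} (hs : ∀ y : R, Commute s y)
    (a b x : R) : a * b * (s * x) = s * (a * b * x) := by
  rw [← mul_assoc (a * b) s x, ← (hs (a * b)).eq, mul_assoc]

theorem quantum_determinant_multiplicative {R : Type*} [Ring R] (q : Rˣ)
    (hq : ∀ x : R, Commute (q : R) x)
    (a b c d a' b' c' d' : R)
    (h1 : b * a = (q : R) * (a * b)) (h2 : c * a = (q : R) * (a * c))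
    (h3 : d * b = (q : R) * (b * d)) (h4 : d * c = (q : R) * (c * d))
    (h5 : c * b = b * c)
    (h6 : d * a - a * d = ((q : R) - (↑q⁻¹ : R)) * (b * c))
    (h1' : b' * a' = (q : R) * (a' * b')) (h2' : c' * a' = (q : R) * (a' * c'))
    (h3' : d' * b' = (q : R) * (b' * d')) (h4' : d' * c' = (q : R) * (c' * d'))
    (h5' : c' * b' = b' * c')
    (h6' : d' * a' - a' * d' = ((q : R) - (↑q⁻¹ : R)) * (b' * c'))
    (hcomm : ∀ x y : R, (x = a ∨ x = b ∨ x = c ∨ x = d) →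
      (y = a' ∨ y = b' ∨ y = c' ∨ y = d') → Commute x y) :
    (a * a' + b * c') * (c * b' + d * d') -
        (↑q⁻¹ : R) * ((a * b' + b * d') * (c * a' + d * c')) =
      (a * d - (↑q⁻¹ : R) * (b * c)) * (a' * d' - (↑q⁻¹ : R) * (b' * c')) := by
  have hqi : ∀ x : R, Commute (↑q⁻¹ : R) x := fun x => (hq x).units_inv_left
  have hs : ∀ x : R, Commute ((q : R) - (↑q⁻¹ : R)) x := fun x => (hq x).sub_left (hqi x)
  have cm : ∀ x y : R, (x = a' ∨ x = b' ∨ x = c' ∨ x = d') →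
      (y = a ∨ y = b ∨ y = c ∨ y = d) → Commute x y :=
    fun x y hx hy => (hcomm y x hy hx).symm
  have cancel : ∀ x : R, (↑q⁻¹ : R) * ((q : R) * x) = x := fun x => by
    rw [← mul_assoc, Units.inv_mul, one_mul]
  -- h6' rearranged
  have h6'' : d' * a' = a' * d' + ((q : R) - (↑q⁻¹ : R)) * (b' * c') :=
    sub_eq_iff_eq_add'.mp h6'
  -- the eight monomial rewrites
  have e1 : a * a' * (c * b') = a * c * (a' * b') :=
    qdm_swap4 (cm a' c (by tauto) (by tauto))
  have e2 : a * a' * (d * d') = a * d * (a' * d') :=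
    qdm_swap4 (cm a' d (by tauto) (by tauto))
  have e3 : b * c' * (c * b') = b * c * (b' * c') := by
    rw [qdm_swap4 (cm c' c (by tauto) (by tauto)), h5']
  have e4 : b * c' * (d * d') = b * d * (c' * d') :=
    qdm_swap4 (cm c' d (by tauto) (by tauto))
  have e5 : a * b' * (c * a') = (q : R) * (a * c * (a' * b')) := by
    rw [qdm_swap4 (cm b' c (by tauto) (by tauto)), h1', qdm_pull hq]
  have e6 : a * b' * (d * c') = a * d * (b' * c') :=
    qdm_swap4 (cm b' d (by tauto) (by tauto))
  have e7 : b * d' * (c * a') =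
      b * c * (a' * d') + ((q : R) - (↑q⁻¹ : R)) * (b * c * (b' * c')) := by
    rw [qdm_swap4 (cm d' c (by tauto) (by tauto)), h6'', mul_add, qdm_pull hs]
  have e8 : b * d' * (d * c') = (q : R) * (b * d * (c' * d')) := by
    rw [qdm_swap4 (cm d' d (by tauto) (by tauto)), h4', qdm_pull hq]
  -- abbreviations for the monomials
  set T1 := a * c * (a' * b') with hT1
  set T2 := a * d * (a' * d') with hT2
  set T3 := b * c * (b' * c') with hT3
  set T4 := b * d * (c' * d') with hT4
  set T6 := a * d * (b' * c') with hT6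
  set U := b * c * (a' * d') with hU
  calc (a * a' + b * c') * (c * b' + d * d') -
        (↑q⁻¹ : R) * ((a * b' + b * d') * (c * a' + d * c'))
      = a * a' * (c * b') + a * a' * (d * d') + (b * c' * (c * b') + b * c' * (d * d')) -
        (↑q⁻¹ : R) * (a * b' * (c * a') + a * b' * (d * c') +
          (b * d' * (c * a') + b * d' * (d * c'))) := by noncomm_ring
    _ = T1 + T2 + (T3 + T4) -
        (↑q⁻¹ : R) * ((q : R) * T1 + T6 +
          ((U + ((q : R) - (↑q⁻¹ : R)) * T3) + (q : R) * T4)) := by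
        rw [e1, e2, e3, e4, e5, e6, e7, e8]
    _ = T1 + T2 + (T3 + T4) -
        ((↑q⁻¹ : R) * ((q : R) * T1) + (↑q⁻¹ : R) * T6 +
          (((↑q⁻¹ : R) * U + (↑q⁻¹ : R) * (((q : R) - (↑q⁻¹ : R)) * T3)) +
            (↑q⁻¹ : R) * ((q : R) * T4))) := by noncomm_ring
    _ = T1 + T2 + (T3 + T4) -
        (T1 + (↑q⁻¹ : R) * T6 +
          (((↑q⁻¹ : R) * U + (T3 - (↑q⁻¹ : R) * ((↑q⁻¹ : R) * T3))) + T4)) := by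
        rw [cancel T1, cancel T4, sub_mul, mul_sub, cancel T3]
    _ = T2 - (↑q⁻¹ : R) * T6 - (↑q⁻¹ : R) * U + (↑q⁻¹ : R) * ((↑q⁻¹ : R) * T3) := by
        abel
    _ = (a * d - (↑q⁻¹ : R) * (b * c)) * (a' * d' - (↑q⁻¹ : R) * (b' * c')) := by
        rw [sub_mul, mul_sub, mul_sub, hT2, hT6, hT3, hU]
        rw [qdm_pull hqi a d (b' * c'), mul_assoc (↑q⁻¹ : R) (b * c) (a' * d'),
          mul_assoc (↑q⁻¹ : R) (b * c) ((↑q⁻¹ : R) * (b' * c')),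
          qdm_pull hqi b c (b' * c')]
        noncomm_ring
end

section
/- Let R be a commutative ring (with binomial coefficients and factorials invertible as needed), B a 2n×2n antisymmetric matrix over R, and 0 ≤ t ≤ n. Then binom(n, t) · Pf(B) = Σ_{I} ε(I, Iᶜ) · Pf(B_I) · Pf(B_{Iᶜ}), where the sum runs over all subsets I ⊆ {1,…,2n} with |I| = 2t, B_I is the antisymmetric submatrix with rows and columns indexed by I, Iᶜ is the complement of I, and ε(I, Iᶜ) = (−1)^{#{(k,l) : k ∈ I, l ∈ Iᶜ, k > l}}. -/
/-- The index `2i` inside `Fin (2n)`. -/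
def pfIdx1 {n : ℕ} (i : Fin n) : Fin (2 * n) :=
  ⟨2 * i.val, by have := i.isLt; omega⟩

/-- The index `2i+1` inside `Fin (2n)`. -/
def pfIdx2 {n : ℕ} (i : Fin n) : Fin (2 * n) :=
  ⟨2 * i.val + 1, by have := i.isLt; omega⟩

/-- The set of permutations `σ` of `{1,…,2n}` with `σ(2i−1) < σ(2i)` for all `i`
and `σ(1) < σ(3) < ⋯ < σ(2n−1)` (written 0-based). -/
def pfPerms (n : ℕ) : Finset (Equiv.Perm (Fin (2 * n))) :=
  Finset.univ.filter fun σ =>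
    (∀ i : Fin n, σ (pfIdx1 i) < σ (pfIdx2 i)) ∧
    (∀ i j : Fin n, i < j → σ (pfIdx1 i) < σ (pfIdx1 j))

/-- Combinatorial Pfaffian of a `2n × 2n` matrix. -/
def pfaffian {R : Type*} [CommRing R] {n : ℕ}
    (B : Matrix (Fin (2 * n)) (Fin (2 * n)) R) : R :=
  ∑ σ ∈ pfPerms n,
    ((Equiv.Perm.sign σ : ℤ) : R) * ∏ i : Fin n, B (σ (pfIdx1 i)) (σ (pfIdx2 i))

/-!
For a `2m × 2m` matrix, `m! · Pf` is the signed sum over all permutations keeping each pair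
`(2i, 2i+1)` increasing but listing the pairs in any order: `Perm (Fin m)` permutes the pairs
freely, and each orbit meets `pfPerms m` exactly once. Group these permutations `σ` of `Fin (2n)`
by the set `I` of values taken on the first `2t` positions. Then `σ` factors uniquely as a pair of
such permutations of `Fin (2t)` and `Fin (2(n - t))` followed by the shuffle listing `I` and then
`Iᶜ` increasingly, whose inversions are exactly the pairs counted by `ε(I, Iᶜ)`. This gives the
identity multiplied by `t! (n - t)!`, which divides the unit `n!`.
-/

open Equiv Finset

section Pairings

variable {R : Type*} {α : Type*} {m : ℕ}

def PairsIncreasing [LT α] (f : Fin (2 * m) → α) : Prop :=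
  ∀ i, f (pfIdx1 i) < f (pfIdx2 i)

def pairProd [CommMonoid R] (B : Matrix α α R) (f : Fin (2 * m) → α) : R :=
  ∏ i, B (f (pfIdx1 i)) (f (pfIdx2 i))

def pairingPerms (m : ℕ) : Finset (Perm (Fin (2 * m))) :=
  univ.filter fun σ => ∀ i, σ (pfIdx1 i) < σ (pfIdx2 i)

def pairingSum [CommRing R] (B : Matrix (Fin (2 * m)) (Fin (2 * m)) R) : R :=
  ∑ σ ∈ pairingPerms m, (Perm.sign σ : R) * pairProd B σ

lemma mem_pairingPerms {σ : Perm (Fin (2 * m))} : σ ∈ pairingPerms m ↔ PairsIncreasing σ := by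
  simp [pairingPerms, PairsIncreasing]

lemma mem_pfPerms {σ : Perm (Fin (2 * m))} :
    σ ∈ pfPerms m ↔ PairsIncreasing σ ∧ StrictMono fun i => σ (pfIdx1 i) := by
  simp [pfPerms, PairsIncreasing, StrictMono]

lemma pfaffian_eq_sum_pairProd [CommRing R] (B : Matrix (Fin (2 * m)) (Fin (2 * m)) R) :
    pfaffian B = ∑ σ ∈ pfPerms m, (Perm.sign σ : R) * pairProd B σ := rfl

lemma pairsIncreasing_comp_iff [LinearOrder α] {β : Type*} [Preorder β] {g : α → β}
    (hg : StrictMono g) {f : Fin (2 * m) → α} : PairsIncreasing (g ∘ f) ↔ PairsIncreasing f := by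
  simp only [PairsIncreasing, Function.comp_apply, hg.lt_iff_lt]

lemma pfIdx1_injective : Function.Injective (pfIdx1 : Fin m → Fin (2 * m)) := fun i j h => by
  simpa [pfIdx1, Fin.ext_iff] using h

end Pairings

section BlockPerm

variable {m : ℕ}

def pairEquiv (m : ℕ) : Fin m × Fin 2 ≃ Fin (2 * m) :=
  finProdFinEquiv.trans (finCongr (Nat.mul_comm m 2))

@[simp] lemma pairEquiv_zero (i : Fin m) : pairEquiv m (i, 0) = pfIdx1 i := by
  ext; simp [pairEquiv, pfIdx1]

@[simp] lemma pairEquiv_one (i : Fin m) : pairEquiv m (i, 1) = pfIdx2 i := by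
  ext; simp [pairEquiv, pfIdx2]; ring

def blockPerm (m : ℕ) : Perm (Fin m) →* Perm (Fin (2 * m)) :=
  (pairEquiv m).permCongrHom.toMonoidHom.comp
    { toFun := fun π => prodCongrLeft fun _ => π
      map_one' := by ext <;> simp
      map_mul' := fun _ _ => by ext <;> simp }

@[simp] lemma blockPerm_pfIdx1 (π : Perm (Fin m)) (i : Fin m) :
    blockPerm m π (pfIdx1 i) = pfIdx1 (π i) := by
  have : (pairEquiv m).symm (pfIdx1 i) = (i, 0) := by simp [Equiv.symm_apply_eq]
  simp [blockPerm, permCongr_apply, this]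

@[simp] lemma blockPerm_pfIdx2 (π : Perm (Fin m)) (i : Fin m) :
    blockPerm m π (pfIdx2 i) = pfIdx2 (π i) := by
  have : (pairEquiv m).symm (pfIdx2 i) = (i, 1) := by simp [Equiv.symm_apply_eq]
  simp [blockPerm, permCongr_apply, this]

@[simp] lemma sign_blockPerm (π : Perm (Fin m)) : Perm.sign (blockPerm m π) = 1 := by
  simp [blockPerm, Perm.sign_prodCongrLeft, Int.units_sq]

lemma pairProd_comp_blockPerm {R α : Type*} [CommMonoid R] (B : Matrix α α R) (f : Fin (2 * m) → α)
    (π : Perm (Fin m)) : pairProd B (f ∘ blockPerm m π) = pairProd B f := by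
  simpa [pairProd] using Equiv.prod_comp π fun j => B (f (pfIdx1 j)) (f (pfIdx2 j))

lemma pairsIncreasing_comp_blockPerm {α : Type*} [LT α] (f : Fin (2 * m) → α)
    (π : Perm (Fin m)) : PairsIncreasing (f ∘ blockPerm m π) ↔ PairsIncreasing f :=
  π.forall_congr fun {_} => by simp

end BlockPerm

section Orbits

variable {m : ℕ}

lemma mul_blockPerm_inj {τ τ' : Perm (Fin (2 * m))} (hτ : τ ∈ pfPerms m) (hτ' : τ' ∈ pfPerms m)
    {π π' : Perm (Fin m)} : τ * blockPerm m π = τ' * blockPerm m π' ↔ τ = τ' ∧ π = π' := by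
  refine ⟨fun h => ?_, fun ⟨hτ, hπ⟩ => hτ ▸ hπ ▸ rfl⟩
  have hf := (mem_pfPerms.mp hτ).2
  have hf' := (mem_pfPerms.mp hτ').2
  have hcomp : (fun i => τ (pfIdx1 i)) ∘ π = (fun i => τ' (pfIdx1 i)) ∘ π' := funext fun i => by
    simpa using congr($h (pfIdx1 i))
  have hrange : Set.range (fun i => τ (pfIdx1 i)) = Set.range fun i => τ' (pfIdx1 i) := by
    rw [← EquivLike.range_comp _ π, hcomp, EquivLike.range_comp]
  rw [(hf.range_inj hf').mp hrange] at hcomp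
  obtain rfl : π = π' := Equiv.ext fun i => hf'.injective (congr_fun hcomp i)
  exact ⟨mul_right_cancel h, rfl⟩

lemma exists_mul_blockPerm_eq {σ : Perm (Fin (2 * m))} (hσ : σ ∈ pairingPerms m) :
    ∃ τ ∈ pfPerms m, ∃ π, τ * blockPerm m π = σ := by
  set s := Tuple.sort fun i => σ (pfIdx1 i)
  have hinj : Function.Injective fun i => σ (pfIdx1 (s i)) :=
    fun i j h => s.injective (pfIdx1_injective (σ.injective h))
  refine ⟨σ * blockPerm m s, mem_pfPerms.mpr ⟨?_, ?_⟩, s⁻¹, ?_⟩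
  · exact (pairsIncreasing_comp_blockPerm σ s).mpr (mem_pairingPerms.mp hσ)
  · simp only [Perm.mul_apply, blockPerm_pfIdx1]
    exact (Tuple.monotone_sort fun i => σ (pfIdx1 i)).strictMono_of_injective hinj
  · rw [mul_assoc, ← map_mul, mul_inv_cancel, map_one, mul_one]

lemma sum_pairingPerms_eq_factorial_smul {M : Type*} [AddCommMonoid M]
    (F : Perm (Fin (2 * m)) → M) (hF : ∀ τ π, F (τ * blockPerm m π) = F τ) :
    ∑ σ ∈ pairingPerms m, F σ = m.factorial • ∑ τ ∈ pfPerms m, F τ := by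
  calc ∑ σ ∈ pairingPerms m, F σ
      = ∑ p ∈ pfPerms m ×ˢ univ, F (p.1 * blockPerm m p.2) := by
        refine (sum_bij (fun p _ => p.1 * blockPerm m p.2) (fun p hp => ?_)
          (fun p hp p' hp' h => ?_) (fun σ hσ => ?_) fun _ _ => rfl).symm
        · exact mem_pairingPerms.mpr ((pairsIncreasing_comp_blockPerm _ _).mpr
            (mem_pfPerms.mp (mem_product.mp hp).1).1)
        · obtain ⟨h₁, h₂⟩ := (mul_blockPerm_inj (mem_product.mp hp).1 (mem_product.mp hp').1).mp h
          exact Prod.ext h₁ h₂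
        · obtain ⟨τ, hτ, π, rfl⟩ := exists_mul_blockPerm_eq hσ
          exact ⟨(τ, π), mem_product.mpr ⟨hτ, mem_univ _⟩, rfl⟩
    _ = m.factorial • ∑ τ ∈ pfPerms m, F τ := by
        simp [sum_product, hF, smul_sum, Fintype.card_perm]

lemma pairingSum_eq_factorial_mul_pfaffian {R : Type*} [CommRing R]
    (B : Matrix (Fin (2 * m)) (Fin (2 * m)) R) : pairingSum B = m.factorial * pfaffian B := by
  rw [pairingSum, sum_pairingPerms_eq_factorial_smul, nsmul_eq_mul, pfaffian_eq_sum_pairProd]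
  intro τ π
  rw [Perm.sign_mul, sign_blockPerm, mul_one, Perm.coe_mul, pairProd_comp_blockPerm]

end Orbits

section Splitting

variable {p q N : ℕ}

def finSumFinEquivOfEq (h : p + q = N) : Fin p ⊕ Fin q ≃ Fin N :=
  finSumFinEquiv.trans (finCongr h)

@[simp] lemma finSumFinEquivOfEq_inl_val (h : p + q = N) (a : Fin p) :
    (finSumFinEquivOfEq h (Sum.inl a)).val = a.val := by
  simp [finSumFinEquivOfEq]

@[simp] lemma finSumFinEquivOfEq_inr_val (h : p + q = N) (b : Fin q) :
    (finSumFinEquivOfEq h (Sum.inr b)).val = p + b.val := by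
  simp [finSumFinEquivOfEq]

@[simp] lemma finSumFinEquivOfEq_inr_lt_inr_iff (h : p + q = N) {b b' : Fin q} :
    finSumFinEquivOfEq h (Sum.inr b) < finSumFinEquivOfEq h (Sum.inr b') ↔ b < b' := by
  simp [Fin.lt_def, -Fin.val_fin_lt]

@[simp] lemma finSumFinEquivOfEq_inl_lt_inr (h : p + q = N) (a : Fin p) (b : Fin q) :
    finSumFinEquivOfEq h (Sum.inl a) < finSumFinEquivOfEq h (Sum.inr b) := by
  simp [Fin.lt_def, -Fin.val_fin_lt]; omega

@[simp] lemma not_finSumFinEquivOfEq_inr_lt_inl (h : p + q = N) (a : Fin p) (b : Fin q) :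
    ¬finSumFinEquivOfEq h (Sum.inr b) < finSumFinEquivOfEq h (Sum.inl a) := by
  simp [Fin.lt_def, -Fin.val_fin_lt]; omega

variable {R : Type*} [CommMonoid R] {α : Type*} {k l m : ℕ}

lemma pfIdx1_finSumFinEquivOfEq (h : k + l = m) (h2 : 2 * k + 2 * l = 2 * m)
    (x : Fin k ⊕ Fin l) :
    pfIdx1 (finSumFinEquivOfEq h x) = finSumFinEquivOfEq h2 (x.map pfIdx1 pfIdx1) := by
  cases x <;> simp [Fin.ext_iff, pfIdx1, mul_add]

lemma pfIdx2_finSumFinEquivOfEq (h : k + l = m) (h2 : 2 * k + 2 * l = 2 * m)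
    (x : Fin k ⊕ Fin l) :
    pfIdx2 (finSumFinEquivOfEq h x) = finSumFinEquivOfEq h2 (x.map pfIdx2 pfIdx2) := by
  cases x <;> simp [Fin.ext_iff, pfIdx2, mul_add]; omega

lemma pairProd_eq_mul (h : 2 * k + 2 * l = 2 * m) (B : Matrix α α R) (f : Fin (2 * m) → α) :
    pairProd B f = pairProd B (f ∘ finSumFinEquivOfEq h ∘ Sum.inl) *
      pairProd B (f ∘ finSumFinEquivOfEq h ∘ Sum.inr) := by
  have hkl : k + l = m := by omega
  rw [pairProd, ← (finSumFinEquivOfEq hkl).prod_comp, Fintype.prod_sum_type]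
  simp [pfIdx1_finSumFinEquivOfEq hkl h, pfIdx2_finSumFinEquivOfEq hkl h, pairProd]

lemma pairsIncreasing_iff_and [LT α] (h : 2 * k + 2 * l = 2 * m) (f : Fin (2 * m) → α) :
    PairsIncreasing f ↔ PairsIncreasing (f ∘ finSumFinEquivOfEq h ∘ Sum.inl) ∧
      PairsIncreasing (f ∘ finSumFinEquivOfEq h ∘ Sum.inr) := by
  have hkl : k + l = m := by omega
  rw [PairsIncreasing, ← (finSumFinEquivOfEq hkl).forall_congr_right, Sum.forall]
  simp [pfIdx1_finSumFinEquivOfEq hkl h, pfIdx2_finSumFinEquivOfEq hkl h, PairsIncreasing]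

end Splitting

section Shuffle

variable {p q N : ℕ}

def Finset.finSumComplEquiv (I : Finset (Fin N)) (hI : #I = p) (hJ : #Iᶜ = q) :
    Fin p ⊕ Fin q ≃ Fin N :=
  (sumCongr (I.orderIsoOfFin hI).toEquiv
    ((Iᶜ.orderIsoOfFin hJ).toEquiv.trans (subtypeEquivRight fun _ => mem_compl))).trans
    (sumCompl (· ∈ I))

lemma card_compl_eq_of_card_eq (h : p + q = N) {I : Finset (Fin N)} (hI : #I = p) :
    #Iᶜ = q := by
  rw [card_compl, Fintype.card_fin]; omega

variable (I : Finset (Fin N)) (hI : #I = p) (hJ : #Iᶜ = q)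

@[simp] lemma Finset.finSumComplEquiv_inl (a : Fin p) :
    I.finSumComplEquiv hI hJ (Sum.inl a) = I.orderIsoOfFin hI a := rfl

@[simp] lemma Finset.finSumComplEquiv_inr (b : Fin q) :
    I.finSumComplEquiv hI hJ (Sum.inr b) = Iᶜ.orderIsoOfFin hJ b := rfl

lemma sign_eq_neg_one_pow_card_inversions (σ : Perm (Fin N)) :
    Perm.sign σ = (-1) ^ (univ.filter fun x : Fin N × Fin N => x.1 < x.2 ∧ σ x.2 < σ x.1).card := by
  rw [Perm.sign_eq_prod_prod_Iio, ← prod_const, prod_filter, Fintype.prod_prod_type, prod_comm]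
  refine prod_congr rfl fun j _ => ?_
  rw [← filter_gt_eq_Iio, prod_filter]
  refine prod_congr rfl fun i _ => ?_
  by_cases hij : i < j
  · rcases (σ.injective.ne hij.ne).lt_or_gt with h | h <;> simp [hij, h, h.not_gt]
  · simp [hij]

def Finset.shufflePerm (h : p + q = N) (σ₁ : Perm (Fin p)) (σ₂ : Perm (Fin q)) : Perm (Fin N) :=
  (finSumFinEquivOfEq h).symm.trans ((sumCongr σ₁ σ₂).trans (I.finSumComplEquiv hI hJ))

variable (h : p + q = N)

lemma Finset.shufflePerm_apply (σ₁ : Perm (Fin p)) (σ₂ : Perm (Fin q)) (x : Fin p ⊕ Fin q) :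
    I.shufflePerm hI hJ h σ₁ σ₂ (finSumFinEquivOfEq h x) =
      I.finSumComplEquiv hI hJ (sumCongr σ₁ σ₂ x) := by
  simp [shufflePerm]

lemma Finset.shufflePerm_comp_inl (σ₁ : Perm (Fin p)) (σ₂ : Perm (Fin q)) :
    ⇑(I.shufflePerm hI hJ h σ₁ σ₂) ∘ finSumFinEquivOfEq h ∘ Sum.inl =
      (fun j => (I.orderIsoOfFin hI j : Fin N)) ∘ σ₁ := by
  ext; simp [shufflePerm_apply]

lemma Finset.shufflePerm_comp_inr (σ₁ : Perm (Fin p)) (σ₂ : Perm (Fin q)) :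
    ⇑(I.shufflePerm hI hJ h σ₁ σ₂) ∘ finSumFinEquivOfEq h ∘ Sum.inr =
      (fun j => (Iᶜ.orderIsoOfFin hJ j : Fin N)) ∘ σ₂ := by
  ext; simp [shufflePerm_apply]

lemma Finset.sign_shufflePerm_one :
    Perm.sign (I.shufflePerm hI hJ h 1 1) =
      (-1) ^ (univ.filter fun x : Fin N × Fin N => x.1 ∈ I ∧ x.2 ∈ Iᶜ ∧ x.2 < x.1).card := by
  rw [sign_eq_neg_one_pow_card_inversions]
  congr 1
  refine card_equiv ((I.shufflePerm hI hJ h 1 1).prodCongr (I.shufflePerm hI hJ h 1 1)) ?_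
  rintro ⟨x, y⟩
  obtain ⟨u, rfl⟩ := (finSumFinEquivOfEq h).surjective x
  obtain ⟨v, rfl⟩ := (finSumFinEquivOfEq h).surjective y
  simp only [mem_filter, mem_univ, true_and, prodCongr_apply, Prod.map, shufflePerm_apply]
  have hJI : ∀ b, Iᶜ.orderEmbOfFin hJ b ∉ I := fun b => mem_compl.mp (orderEmbOfFin_mem _ _ _)
  cases u <;> cases v <;> simp [hJI] <;> exact le_of_lt

lemma Finset.sign_shufflePerm (σ₁ : Perm (Fin p)) (σ₂ : Perm (Fin q)) :
    Perm.sign (I.shufflePerm hI hJ h σ₁ σ₂) =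
      Perm.sign (I.shufflePerm hI hJ h 1 1) * (Perm.sign σ₁ * Perm.sign σ₂) := by
  have : I.shufflePerm hI hJ h σ₁ σ₂ =
      I.shufflePerm hI hJ h 1 1 * (finSumFinEquivOfEq h).permCongr (sumCongr σ₁ σ₂) := by
    ext x; simp [shufflePerm, permCongr_apply]
  rw [this, Perm.sign_mul, Perm.sign_permCongr, Perm.sign_sumCongr]

lemma Finset.shufflePerm_injective {σ₁ σ₁' : Perm (Fin p)} {σ₂ σ₂' : Perm (Fin q)}
    (he : I.shufflePerm hI hJ h σ₁ σ₂ = I.shufflePerm hI hJ h σ₁' σ₂') : σ₁ = σ₁' ∧ σ₂ = σ₂' := by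
  have : sumCongr σ₁ σ₂ = sumCongr σ₁' σ₂' := Equiv.ext fun u => by
    simpa [shufflePerm_apply] using congr($he (finSumFinEquivOfEq h u))
  simpa using Perm.sumCongrHom_injective (a₁ := (σ₁, σ₂)) (a₂ := (σ₁', σ₂')) this

def firstBlock (h : p + q = N) (σ : Perm (Fin N)) : Finset (Fin N) :=
  univ.image fun a : Fin p => σ (finSumFinEquivOfEq h (Sum.inl a))

lemma card_firstBlock (σ : Perm (Fin N)) : #(firstBlock h σ) = p := by
  rw [firstBlock, card_image_of_injective _ fun a b hab => by simpa using hab, card_univ,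
    Fintype.card_fin]

lemma Finset.firstBlock_shufflePerm (σ₁ : Perm (Fin p)) (σ₂ : Perm (Fin q)) :
    firstBlock h (I.shufflePerm hI hJ h σ₁ σ₂) = I := by
  simp only [firstBlock, shufflePerm_apply, sumCongr_apply, Sum.map_inl, finSumComplEquiv_inl,
    coe_orderIsoOfFin_apply]
  rw [← Function.comp_def, ← image_image, image_univ_equiv, image_orderEmbOfFin_univ]

lemma Finset.exists_shufflePerm_eq {σ : Perm (Fin N)} (hσ : firstBlock h σ = I) :
    ∃ σ₁ σ₂, I.shufflePerm hI hJ h σ₁ σ₂ = σ := by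
  set E := I.finSumComplEquiv hI hJ
  set σ' : Perm (Fin p ⊕ Fin q) := ((finSumFinEquivOfEq h).trans σ).trans E.symm
  have hmaps : Set.MapsTo σ' (Set.range Sum.inl) (Set.range Sum.inl) := by
    rintro _ ⟨a, rfl⟩
    have hmem : σ (finSumFinEquivOfEq h (Sum.inl a)) ∈ I := hσ ▸ mem_image_of_mem _ (mem_univ a)
    refine ⟨(I.orderIsoOfFin hI).symm ⟨_, hmem⟩, ?_⟩
    simp [σ', Equiv.eq_symm_apply, E]
  obtain ⟨⟨σ₁, σ₂⟩, hσ'⟩ := Perm.mem_sumCongrHom_range_of_perm_mapsTo_inl hmaps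
  refine ⟨σ₁, σ₂, Equiv.ext fun x => ?_⟩
  have := congr($hσ' ((finSumFinEquivOfEq h).symm x))
  simp only [Perm.sumCongrHom_apply, sumCongr_apply, trans_apply, apply_symm_apply, σ'] at this
  simp [shufflePerm, this, E]

end Shuffle

section Laplace

variable {R : Type*} [CommRing R] {k l m : ℕ} (h : 2 * k + 2 * l = 2 * m)
  (I : Finset (Fin (2 * m))) (hI : #I = 2 * k) (hJ : #Iᶜ = 2 * l)
  (σ₁ : Perm (Fin (2 * k))) (σ₂ : Perm (Fin (2 * l)))

lemma Finset.pairsIncreasing_shufflePerm :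
    PairsIncreasing (I.shufflePerm hI hJ h σ₁ σ₂) ↔ PairsIncreasing σ₁ ∧ PairsIncreasing σ₂ := by
  rw [pairsIncreasing_iff_and h, shufflePerm_comp_inl, shufflePerm_comp_inr]
  exact and_congr
    (pairsIncreasing_comp_iff ((Subtype.strictMono_coe _).comp (I.orderIsoOfFin hI).strictMono))
    (pairsIncreasing_comp_iff ((Subtype.strictMono_coe _).comp (Iᶜ.orderIsoOfFin hJ).strictMono))

lemma Finset.pairProd_shufflePerm (B : Matrix (Fin (2 * m)) (Fin (2 * m)) R) :
    pairProd B (I.shufflePerm hI hJ h σ₁ σ₂) =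
      pairProd (B.submatrix (fun j => (I.orderIsoOfFin hI j : Fin (2 * m)))
          (fun j => (I.orderIsoOfFin hI j : Fin (2 * m)))) σ₁ *
        pairProd (B.submatrix (fun j => (Iᶜ.orderIsoOfFin hJ j : Fin (2 * m)))
          (fun j => (Iᶜ.orderIsoOfFin hJ j : Fin (2 * m)))) σ₂ := by
  rw [pairProd_eq_mul h, shufflePerm_comp_inl, shufflePerm_comp_inr]
  rfl

lemma sum_filter_firstBlock_eq (B : Matrix (Fin (2 * m)) (Fin (2 * m)) R) :
    ∑ σ ∈ (pairingPerms m).filter (fun σ => firstBlock h σ = I), (Perm.sign σ : R) * pairProd B σ =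
      (-1 : R) ^ (univ.filter fun x : Fin (2 * m) × Fin (2 * m) =>
          x.1 ∈ I ∧ x.2 ∈ Iᶜ ∧ x.2 < x.1).card *
        (pairingSum (B.submatrix (fun j => (I.orderIsoOfFin hI j : Fin (2 * m)))
            (fun j => (I.orderIsoOfFin hI j : Fin (2 * m)))) *
          pairingSum (B.submatrix (fun j => (Iᶜ.orderIsoOfFin hJ j : Fin (2 * m)))
            (fun j => (Iᶜ.orderIsoOfFin hJ j : Fin (2 * m))))) := by
  rw [pairingSum, pairingSum, sum_mul_sum, ← sum_product', mul_sum]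
  symm
  refine sum_bij (fun σ _ => I.shufflePerm hI hJ h σ.1 σ.2) (fun σ hσ => ?_)
    (fun σ _ σ' _ he => ?_) (fun σ hσ => ?_) fun σ _ => ?_
  · rw [mem_product, mem_pairingPerms, mem_pairingPerms] at hσ
    exact mem_filter.mpr ⟨mem_pairingPerms.mpr ((I.pairsIncreasing_shufflePerm h hI hJ _ _).mpr hσ),
      I.firstBlock_shufflePerm hI hJ h _ _⟩
  · obtain ⟨h₁, h₂⟩ := I.shufflePerm_injective hI hJ h he
    exact Prod.ext h₁ h₂
  · obtain ⟨hσ, hblock⟩ := mem_filter.mp hσ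
    obtain ⟨σ₁, σ₂, rfl⟩ := I.exists_shufflePerm_eq hI hJ h hblock
    obtain ⟨h₁, h₂⟩ := (I.pairsIncreasing_shufflePerm h hI hJ σ₁ σ₂).mp (mem_pairingPerms.mp hσ)
    exact ⟨(σ₁, σ₂), mem_product.mpr ⟨mem_pairingPerms.mpr h₁, mem_pairingPerms.mpr h₂⟩, rfl⟩
  · rw [I.pairProd_shufflePerm h hI hJ, I.sign_shufflePerm hI hJ h, I.sign_shufflePerm_one hI hJ h]
    push_cast
    ring

lemma pairingSum_eq_sum_powersetCard (B : Matrix (Fin (2 * m)) (Fin (2 * m)) R) :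
    pairingSum B = ∑ I ∈ (powersetCard (2 * k) (univ : Finset (Fin (2 * m)))).attach,
      (-1 : R) ^ (univ.filter fun x : Fin (2 * m) × Fin (2 * m) =>
          x.1 ∈ I.1 ∧ x.2 ∈ I.1ᶜ ∧ x.2 < x.1).card *
        (pairingSum (B.submatrix
            (fun j => (I.1.orderIsoOfFin (mem_powersetCard.mp I.2).2 j : Fin (2 * m)))
            (fun j => (I.1.orderIsoOfFin (mem_powersetCard.mp I.2).2 j : Fin (2 * m)))) *
          pairingSum (B.submatrix
            (fun j => (I.1ᶜ.orderIsoOfFin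
              (card_compl_eq_of_card_eq h (mem_powersetCard.mp I.2).2) j : Fin (2 * m)))
            (fun j => (I.1ᶜ.orderIsoOfFin
              (card_compl_eq_of_card_eq h (mem_powersetCard.mp I.2).2) j : Fin (2 * m))))) := by
  have hmaps : ∀ σ ∈ pairingPerms m, firstBlock h σ ∈ powersetCard (2 * k) univ :=
    fun σ _ => mem_powersetCard.mpr ⟨subset_univ _, card_firstBlock h σ⟩
  rw [pairingSum, ← sum_fiberwise_of_maps_to hmaps, ← sum_attach]
  exact sum_congr rfl fun I _ => sum_filter_firstBlock_eq h I.1 _ _ B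

end Laplace

theorem pfaffian_laplace_expansion {R : Type*} [CommRing R] (n t : ℕ)
    (ht : t ≤ n) (hfac : IsUnit ((n.factorial : R)))
    (B : Matrix (Fin (2 * n)) (Fin (2 * n)) R) :
    (n.choose t : R) * pfaffian B =
      ∑ I ∈ (Finset.powersetCard (2 * t)
            (Finset.univ : Finset (Fin (2 * n)))).attach,
        (-1 : R) ^ (Finset.univ.filter
            (fun p : Fin (2 * n) × Fin (2 * n) =>
              p.1 ∈ I.1 ∧ p.2 ∈ I.1ᶜ ∧ p.2 < p.1)).card *
          pfaffian (B.submatrix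
            (fun j : Fin (2 * t) =>
              (I.1.orderIsoOfFin (Finset.mem_powersetCard.mp I.2).2 j : Fin (2 * n)))
            (fun j : Fin (2 * t) =>
              (I.1.orderIsoOfFin (Finset.mem_powersetCard.mp I.2).2 j : Fin (2 * n)))) *
          pfaffian (B.submatrix
            (fun j : Fin (2 * (n - t)) =>
              ((I.1ᶜ).orderIsoOfFin (by
                rw [Finset.card_compl, Fintype.card_fin,
                  (Finset.mem_powersetCard.mp I.2).2]; omega) j : Fin (2 * n)))
            (fun j : Fin (2 * (n - t)) =>
              ((I.1ᶜ).orderIsoOfFin (by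
                rw [Finset.card_compl, Fintype.card_fin,
                  (Finset.mem_powersetCard.mp I.2).2]; omega) j : Fin (2 * n)))) := by
  have hsplit : n.choose t * (t.factorial * (n - t).factorial) = n.factorial := by
    rw [← mul_assoc, Nat.choose_mul_factorial_mul_factorial ht]
  have hunit : IsUnit ((t.factorial * (n - t).factorial : ℕ) : R) :=
    isUnit_of_mul_isUnit_right (by rwa [← Nat.cast_mul, hsplit])
  refine hunit.mul_left_cancel ?_
  calc ((t.factorial * (n - t).factorial : ℕ) : R) * ((n.choose t : R) * pfaffian B)
      = pairingSum B := by
        rw [pairingSum_eq_factorial_mul_pfaffian, ← hsplit]; push_cast; ring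
    _ = _ := pairingSum_eq_sum_powersetCard (by omega : 2 * t + 2 * (n - t) = 2 * n) B
    _ = _ := by
        rw [mul_sum]
        refine sum_congr rfl fun I _ => ?_
        rw [pairingSum_eq_factorial_mul_pfaffian, pairingSum_eq_factorial_mul_pfaffian]
        push_cast
        ring
end
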